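/- For any two policies π' and π, the difference of discounted future state distributions satisfies d^{π'} - d^π = γ (I - γ P_{π'})^{-1} (P_{π'} - P_π) d^π. -/

import Mathlib

open BigOperators Finset Matrix

noncomputable section

variable {S A : Type*}

/-- Policy transition matrix (column-stochastic): entry `(s', s)` is
`P_pol(s'|s) = ∑ a, P(s'|s,a) pol(a|s)`. -/
def Pmat [Fintype A] (P : S → A → S → ℝ) (pol : S → A → ℝ) : Matrix S S ℝ :=
  fun s' s => ∑ a, P s a s' * pol s a

/-- Discounted future state distribution `d^π = (1-γ) ∑_t γ^t P_π^t μ`. -/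
def dFut [Fintype S] [DecidableEq S] [Fintype A] (γ : ℝ) (P : S → A → S → ℝ)
    (μ : S → ℝ) (pol : S → A → ℝ) : S → ℝ :=
  fun s => (1 - γ) * ∑' t : ℕ, γ ^ t * ((Pmat P pol ^ t) *ᵥ μ) s

/-- Discounted return `J(π)` (also used as the cost return `J_C(π)` with a cost `C`
in place of the reward `R`). -/
def Jret [Fintype S] [DecidableEq S] [Fintype A] (γ : ℝ) (P : S → A → S → ℝ)
    (R : S → A → S → ℝ) (μ : S → ℝ) (pol : S → A → ℝ) : ℝ :=
  (1 / (1 - γ)) * ∑ s, dFut γ P μ pol s * (∑ a, pol s a * (∑ s', P s a s' * R s a s'))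

/-- Total variational divergence between action distributions at state `s`. -/
def DTV [Fintype A] (pol' pol : S → A → ℝ) (s : S) : ℝ :=
  (1 / 2) * ∑ a, |pol' s a - pol s a|

/-- Kullback–Leibler divergence between action distributions at state `s`. -/
def DKL [Fintype A] (pol' pol : S → A → ℝ) (s : S) : ℝ :=
  ∑ a, pol' s a * Real.log (pol' s a / pol s a)

/-- Advantage function `A^π(s,a) = Q^π(s,a) - V^π(s)` built from a value function `V`
(also used for cost advantages with a cost `C` in place of `R`). -/
def Adv [Fintype S] (γ : ℝ) (P : S → A → S → ℝ) (R : S → A → S → ℝ)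
    (V : S → ℝ) (s : S) (a : A) : ℝ :=
  (∑ s', P s a s' * (R s a s' + γ * V s')) - V s

/-- `ε_f^{π'} = max_s |E_{a∼π'(·|s), s'∼P}[δ_f(s,a,s')]|` where
`δ_f(s,a,s') = R(s,a,s') + γ f(s') - f(s)`. -/
def epsF [Fintype S] [Fintype A] (γ : ℝ) (P : S → A → S → ℝ) (R : S → A → S → ℝ)
    (f : S → ℝ) (pol' : S → A → ℝ) : ℝ :=
  ⨆ s, |∑ a, pol' s a * (∑ s', P s a s' * (R s a s' + γ * f s' - f s))|

/-- Surrogate `L_{π,f}(π') = E_{s∼d^π, a∼π, s'∼P}[(π'(a|s)/π(a|s) - 1) δ_f(s,a,s')]`. -/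
def Lsurr [Fintype S] [DecidableEq S] [Fintype A] (γ : ℝ) (P : S → A → S → ℝ)
    (R : S → A → S → ℝ) (μ : S → ℝ) (f : S → ℝ) (pol pol' : S → A → ℝ) : ℝ :=
  ∑ s, dFut γ P μ pol s * (∑ a, pol s a * (∑ s', P s a s' *
    ((pol' s a / pol s a - 1) * (R s a s' + γ * f s' - f s))))


/-! Summing the geometric series shows that `d^π` solves `(I - γ P_π) d = (1 - γ) μ`. The matrix
`I - γ P_{π'}` is strictly diagonally dominant by columns (each column of `γ P_{π'}` sums to
`γ < 1`), hence invertible, and applying it to `d^{π'} - d^π` gives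
`(I - γ P_π) d^π - (I - γ P_{π'}) d^π = γ (P_{π'} - P_π) d^π`. -/

section ColStochastic

variable {n : Type*} [Fintype n] [DecidableEq n] {M : Matrix n n ℝ} {γ : ℝ}

lemma abs_mulVec_le_of_mem_colStochastic (hM : M ∈ colStochastic ℝ n) (v : n → ℝ) (i : n) :
    |(M *ᵥ v) i| ≤ ∑ j, |v j| :=
  calc |(M *ᵥ v) i| ≤ ∑ j, |M i j * v j| := abs_sum_le_sum_abs _ _
    _ ≤ ∑ j, |v j| := sum_le_sum fun j _ => by
      rw [abs_mul, abs_of_nonneg (nonneg_of_mem_colStochastic hM)]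
      exact mul_le_of_le_one_left (abs_nonneg _) (le_one_of_mem_colStochastic hM)

lemma summable_geometric_smul_pow_mulVec (hM : M ∈ colStochastic ℝ n) (hγ0 : 0 ≤ γ)
    (hγ1 : γ < 1) (v : n → ℝ) : Summable fun t : ℕ => γ ^ t • (M ^ t *ᵥ v) := by
  refine Pi.summable.2 fun i => Summable.of_norm_bounded
    ((summable_geometric_of_lt_one hγ0 hγ1).mul_right (∑ j, |v j|)) fun t => ?_
  rw [Pi.smul_apply, smul_eq_mul, Real.norm_eq_abs, abs_mul, abs_pow, abs_of_nonneg hγ0]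
  exact mul_le_mul_of_nonneg_left (abs_mulVec_le_of_mem_colStochastic (pow_mem hM t) v i)
    (pow_nonneg hγ0 t)

lemma one_sub_smul_mulVec_tsum_geometric (hM : M ∈ colStochastic ℝ n) (hγ0 : 0 ≤ γ)
    (hγ1 : γ < 1) (v : n → ℝ) :
    (1 - γ • M) *ᵥ ∑' t : ℕ, γ ^ t • (M ^ t *ᵥ v) = v := by
  have hsum := summable_geometric_smul_pow_mulVec hM hγ0 hγ1 v
  have hshift : ∑' t : ℕ, γ ^ t • (M ^ t *ᵥ v)
      = v + γ • (M *ᵥ ∑' t : ℕ, γ ^ t • (M ^ t *ᵥ v)) := by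
    have hmap := (γ • M.mulVecLin).toContinuousLinearMap.map_tsum hsum
    simp only [LinearMap.coe_toContinuousLinearMap', LinearMap.smul_apply, mulVecLin_apply] at hmap
    rw [hmap, hsum.tsum_eq_zero_add]
    simp only [pow_zero, one_smul, one_mulVec, pow_succ', mul_smul, mulVec_smul, ← mulVec_mulVec]
  rw [sub_mulVec, one_mulVec, smul_mulVec]
  exact sub_eq_iff_eq_add.2 hshift

lemma isUnit_det_one_sub_smul_of_mem_colStochastic (hM : M ∈ colStochastic ℝ n) (hγ0 : 0 ≤ γ)
    (hγ1 : γ < 1) : IsUnit (1 - γ • M).det := by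
  refine (det_ne_zero_of_sum_col_lt_diag fun k => ?_).isUnit
  have hoff : ∑ i ∈ univ.erase k, ‖(1 - γ • M) i k‖ = γ * (1 - M k k) := by
    rw [← sum_col_of_mem_colStochastic hM k, ← sum_erase_eq_sub (mem_univ k), mul_sum]
    refine sum_congr rfl fun i hi => ?_
    rw [Matrix.sub_apply, one_apply_ne (ne_of_mem_erase hi), Matrix.smul_apply, smul_eq_mul,
      zero_sub, norm_neg, Real.norm_eq_abs,
      abs_of_nonneg (mul_nonneg hγ0 (nonneg_of_mem_colStochastic hM))]
  have hMkk : M k k ≤ 1 := le_one_of_mem_colStochastic hM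
  have hdiag : ‖(1 - γ • M) k k‖ = 1 - γ * M k k := by
    rw [Matrix.sub_apply, one_apply_eq, Matrix.smul_apply, smul_eq_mul, Real.norm_eq_abs,
      abs_of_nonneg]
    nlinarith
  rw [hoff, hdiag]
  linarith

end ColStochastic

section MDP

variable [Fintype S] [DecidableEq S] [Fintype A]

lemma Pmat_mem_colStochastic {P : S → A → S → ℝ} (hP0 : ∀ s a s', 0 ≤ P s a s')
    (hP1 : ∀ s a, ∑ s', P s a s' = 1) {pol : S → A → ℝ} (hpol0 : ∀ s a, 0 ≤ pol s a)
    (hpol1 : ∀ s, ∑ a, pol s a = 1) : Pmat P pol ∈ colStochastic ℝ S := by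
  refine mem_colStochastic_iff_sum.2 ⟨fun s' s => sum_nonneg fun a _ =>
    mul_nonneg (hP0 _ _ _) (hpol0 _ _), fun s => ?_⟩
  simp only [Pmat]
  rw [sum_comm]
  simp_rw [← sum_mul, hP1, one_mul, hpol1]

lemma dFut_eq_smul_tsum {γ : ℝ} (hγ0 : 0 ≤ γ) (hγ1 : γ < 1) {P : S → A → S → ℝ} (μ : S → ℝ)
    {pol : S → A → ℝ} (hM : Pmat P pol ∈ colStochastic ℝ S) :
    dFut γ P μ pol = (1 - γ) • ∑' t : ℕ, γ ^ t • (Pmat P pol ^ t *ᵥ μ) := by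
  ext s
  rw [Pi.smul_apply, tsum_apply (summable_geometric_smul_pow_mulVec hM hγ0 hγ1 μ)]
  rfl

lemma one_sub_smul_Pmat_mulVec_dFut {γ : ℝ} (hγ0 : 0 ≤ γ) (hγ1 : γ < 1) {P : S → A → S → ℝ}
    (μ : S → ℝ) {pol : S → A → ℝ} (hM : Pmat P pol ∈ colStochastic ℝ S) :
    (1 - γ • Pmat P pol) *ᵥ dFut γ P μ pol = (1 - γ) • μ := by
  rw [dFut_eq_smul_tsum hγ0 hγ1 μ hM, mulVec_smul, one_sub_smul_mulVec_tsum_geometric hM hγ0 hγ1]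

end MDP

theorem dFut_difference_identity_general
    [Fintype S] [DecidableEq S] [Fintype A]
    (γ : ℝ) (hγ0 : 0 ≤ γ) (hγ1 : γ < 1)
    (P : S → A → S → ℝ) (hP0 : ∀ s a s', 0 ≤ P s a s')
    (hP1 : ∀ s a, (∑ s', P s a s') = 1)
    (μ : S → ℝ)
    (pol pol' : S → A → ℝ)
    (hpol0 : ∀ s a, 0 ≤ pol s a) (hpol1 : ∀ s, (∑ a, pol s a) = 1)
    (hpol'0 : ∀ s a, 0 ≤ pol' s a) (hpol'1 : ∀ s, (∑ a, pol' s a) = 1) :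
    (fun s => dFut γ P μ pol' s - dFut γ P μ pol s)
      = fun s => γ * ((1 - γ • Pmat P pol')⁻¹
            *ᵥ ((Pmat P pol' - Pmat P pol) *ᵥ dFut γ P μ pol)) s := by
  have hM := Pmat_mem_colStochastic hP0 hP1 hpol0 hpol1
  have hM' := Pmat_mem_colStochastic hP0 hP1 hpol'0 hpol'1
  have := invertibleOfIsUnitDet _ (isUnit_det_one_sub_smul_of_mem_colStochastic hM' hγ0 hγ1)
  set d := dFut γ P μ pol
  set d' := dFut γ P μ pol'
  have hdiff : (1 - γ • Pmat P pol') *ᵥ (d' - d) = γ • ((Pmat P pol' - Pmat P pol) *ᵥ d) :=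
    calc (1 - γ • Pmat P pol') *ᵥ (d' - d)
        = (1 - γ • Pmat P pol) *ᵥ d - (1 - γ • Pmat P pol') *ᵥ d := by
          rw [mulVec_sub, one_sub_smul_Pmat_mulVec_dFut hγ0 hγ1 μ hM,
            one_sub_smul_Pmat_mulVec_dFut hγ0 hγ1 μ hM']
      _ = γ • ((Pmat P pol' - Pmat P pol) *ᵥ d) := by
          rw [← sub_mulVec, ← smul_mulVec, smul_sub]
          congr 1
          abel
  show d' - d = γ • _
  rw [← mulVec_smul]
  exact (inv_mulVec_eq_vec hdiff.symm).symm

/-- Identity for the difference of discounted future state distributions: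
`d^{π'} - d^π = γ (I - γ P_{π'})⁻¹ (P_{π'} - P_π) d^π`. -/
theorem dFut_difference_identity
    [Fintype S] [DecidableEq S] [Nonempty S] [Fintype A] [Nonempty A]
    (γ : ℝ) (hγ0 : 0 ≤ γ) (hγ1 : γ < 1)
    (P : S → A → S → ℝ) (hP0 : ∀ s a s', 0 ≤ P s a s')
    (hP1 : ∀ s a, (∑ s', P s a s') = 1)
    (μ : S → ℝ) (hμ0 : ∀ s, 0 ≤ μ s) (hμ1 : (∑ s, μ s) = 1)
    (pol pol' : S → A → ℝ)
    (hpol0 : ∀ s a, 0 ≤ pol s a) (hpol1 : ∀ s, (∑ a, pol s a) = 1)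
    (hpol'0 : ∀ s a, 0 ≤ pol' s a) (hpol'1 : ∀ s, (∑ a, pol' s a) = 1) :
    (fun s => dFut γ P μ pol' s - dFut γ P μ pol s)
      = fun s => γ * ((1 - γ • Pmat P pol')⁻¹
            *ᵥ ((Pmat P pol' - Pmat P pol) *ᵥ dFut γ P μ pol)) s :=
  dFut_difference_identity_general γ hγ0 hγ1 P hP0 hP1 μ pol pol' hpol0 hpol1 hpol'0 hpol'1
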